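/- Let n ≥ 1 and let (k_1, …, k_n) and (k'_1, …, k'_n) be tuples of positive integers, each satisfying k_{i+1} ≥ k_i − 1 for all 1 ≤ i < n and k_n = 1, such that (k'_1, …, k'_n) is a permutation (rearrangement) of (k_1, …, k_n). Then, under the uniform measure on orderings of the 2n socks, the probability that K_j(x(ω)) = k_j for all j equals the probability that K_j(x(ω)) = k'_j for all j; both equal 2^n · n! · (∏_{i=1}^n k_i)/(2n)!. -/

import Mathlib

/-- The path associated with an ordering `ω` of the `2n` socks `{1,…,n} × {0,1}`:
`x 0 = 0`, and the path steps up when a new sock type is drawn and down when the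
drawn type has already occurred. -/
def sockPath (n : ℕ) (ω : Fin (2 * n) → Fin n × Bool) : ℕ → ℤ
  | 0 => 0
  | m + 1 =>
    sockPath n ω m +
      if h : m < 2 * n then
        if ∃ i : Fin (2 * n), (i : ℕ) < m ∧ (ω i).1 = (ω ⟨m, h⟩).1 then -1 else 1
      else 0

/-- `Lseq x j` is `L_j(x)`: `L_0(x) = 0` and
`L_j(x) = min { i > L_{j-1}(x) : x (i+1) = x i - 1 }`. -/
noncomputable def Lseq (x : ℕ → ℤ) : ℕ → ℕ
  | 0 => 0
  | j + 1 => sInf {i : ℕ | Lseq x j < i ∧ x (i + 1) = x i - 1}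

/-- `Kseq x j` is `K_j(x) = x (L_j(x))`. -/
noncomputable def Kseq (x : ℕ → ℤ) (j : ℕ) : ℤ := x (Lseq x j)

/-- A Dyck path of length `2n`: a tuple `(x 1, …, x (2n))` of integers with `x 1 = 1`,
`|x (i+1) - x i| = 1` for `1 ≤ i < 2n`, `x i ≥ 0` for `1 ≤ i ≤ 2n - 1`, and `x (2n) = 0`. -/
def IsDyckPath (n : ℕ) (x : ℕ → ℤ) : Prop :=
  x 1 = 1 ∧ (∀ i, 1 ≤ i → i < 2 * n → |x (i + 1) - x i| = 1) ∧
    (∀ i, 1 ≤ i → i ≤ 2 * n - 1 → 0 ≤ x i) ∧ x (2 * n) = 0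

/-!
Label position `m` of an ordering as a *repeat* if the type drawn there was drawn before, so
that the path steps down exactly at repeats and `x_m = m - 2 · #(repeats before m)`. Hence
`L_j` is the `j`-th repeat and `K_j = L_j - 2(j - 1)`; since `k_{j+1} ≥ k_j - 1` makes
`j ↦ 2(j - 1) + k_j` strictly increasing, the event `{K_j = k_j for all j}` says exactly that
the set of repeats is `{2(j - 1) + k_j}`. Drawing the socks one at a time, the number of
orderings with a prescribed set of repeats is a product of one factor per position: at the
`r`-th position that is not a repeat any of the `2(n - r)` socks of a fresh type may be drawn,
and at a repeat `2(j - 1) + k_j` the partner of one of the `k_j` types drawn exactly once so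
far. The count `2^n · n! · ∏ k_j` is symmetric in the `k_j`.
-/

open Finset

namespace Nat

theorem count_add_count_not (p : ℕ → Prop) [DecidablePred p] (n : ℕ) :
    count p n + count (fun i => ¬p i) n = n := by
  simp only [count_eq_card_filter_range, card_filter_add_card_filter_not, card_range]

theorem prod_filter_range_count {M : Type*} [CommMonoid M] (p : ℕ → Prop) [DecidablePred p]
    (g : ℕ → M) (m : ℕ) :
    ∏ i ∈ (range m).filter p, g (count p i) = ∏ r ∈ range (count p m), g r := by
  induction m with
  | zero => simp
  | succ m ih =>
    rw [range_add_one, filter_insert, count_succ]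
    by_cases hm : p m
    · rw [if_pos hm, if_pos hm, prod_insert (by simp), ih, prod_range_succ, mul_comm]
    · rw [if_neg hm, if_neg hm, ih, add_zero]

theorem forall_lt_card_toFinset_mem_iff (T : Finset ℕ) (i : ℕ) :
    (∀ hf : (Set.ofPred (· ∈ T)).Finite, i < #hf.toFinset) ↔ i < #T := by
  have hT : (Set.ofPred (· ∈ T)).Finite := T.finite_toSet
  have : hT.toFinset = T := by ext; simp
  exact ⟨fun h => this ▸ h hT, fun h hf => by simpa [this] using h⟩

theorem nth_mem_eq_iff_eq_image {T : Finset ℕ} {N : ℕ} (hT : #T = N) {d : ℕ → ℕ}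
    (hd : StrictMonoOn d (Set.Iio N)) :
    (∀ i < N, nth (· ∈ T) i = d i) ↔ T = (range N).image d := by
  subst hT
  have hidx : {i | ∀ hf : (Set.ofPred (· ∈ T)).Finite, i < #hf.toFinset} = Set.Iio #T := by
    ext i
    exact forall_lt_card_toFinset_mem_iff T i
  constructor
  · intro h
    refine (eq_of_subset_of_card_le (fun x hx => ?_) ?_).symm
    · obtain ⟨i, hi, rfl⟩ := mem_image.mp hx
      rw [mem_range] at hi
      rw [← h i hi]
      exact nth_mem i ((forall_lt_card_toFinset_mem_iff T i).mpr hi)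
    · rw [Finset.card_image_of_injOn (by simpa using hd.injOn), card_range]
  · intro h i hi
    refine (eq_nth_of_strictMonoOn_of_mapsTo_of_surjOn d ?_ ?_ ?_ (by rwa [hidx])).symm
    all_goals rw [hidx]
    · intro x (hx : x ∈ T)
      rw [h] at hx
      obtain ⟨j, hj, rfl⟩ := mem_image.mp hx
      exact ⟨j, by simpa using hj, rfl⟩
    · intro j hj
      show d j ∈ T
      rw [h]
      exact mem_image_of_mem d (by simpa using hj)
    · exact hd

end Nat

theorem Finset.ite_insert_eq_ite_insert_iff {β : Type*} [DecidableEq β] {x : β}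
    {s t : Finset β} (hs : x ∉ s) (ht : x ∉ t) (p q : Prop) [Decidable p] [Decidable q] :
    ((if p then insert x s else s) = if q then insert x t else t) ↔ s = t ∧ (p ↔ q) := by
  have hne {u v : Finset β} (hv : x ∉ v) : insert x u ≠ v :=
    fun h => hv (h ▸ mem_insert_self x u)
  have hinj : insert x s = insert x t ↔ s = t :=
    ⟨fun h => by rw [← erase_insert hs, h, erase_insert ht], congrArg _⟩
  by_cases hp : p <;> by_cases hq : q <;> simp [hp, hq, hne ht, (hne hs).symm, hinj]

theorem card_filter_equiv_eq_card_filter_injective {β γ : Type*} [Fintype β] [DecidableEq β]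
    [Fintype γ] [DecidableEq γ] (hcard : Fintype.card β = Fintype.card γ)
    (P : (β → γ) → Prop) [DecidablePred P] :
    #{e : β ≃ γ | P e} = #{f : β → γ | Function.Injective f ∧ P f} := by
  refine card_nbij (fun e => ⇑e) (fun e he => ?_) (fun e _ e' _ h => DFunLike.coe_injective h)
    fun f hf => ?_
  · simp only [coe_filter, mem_univ, true_and, Set.mem_ofPred_eq] at he ⊢
    exact ⟨e.injective, he⟩
  · simp only [coe_filter, mem_univ, true_and, Set.mem_ofPred_eq] at hf
    have hbij := (Fintype.bijective_iff_injective_and_card f).mpr ⟨hf.1, hcard⟩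
    exact ⟨Equiv.ofBijective f hbij, by simpa using hf.2, rfl⟩

theorem lseq_succ_eq_nth {x : ℕ → ℤ} (h₀ : x 1 ≠ x 0 - 1) {j : ℕ}
    (hj : ∀ hf : (Set.ofPred fun i => x (i + 1) = x i - 1).Finite, j < #hf.toFinset) :
    Lseq x (j + 1) = Nat.nth (fun i => x (i + 1) = x i - 1) j := by
  induction j with
  | zero =>
    rw [Lseq, Nat.nth_zero, Lseq]
    congr 1
    ext i
    simp only [Set.mem_ofPred_eq]
    exact ⟨fun h => h.2, fun h => ⟨Nat.pos_of_ne_zero (by rintro rfl; exact h₀ h), h⟩⟩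
  | succ j ih =>
    have hj' : ∀ hf, j < #(Set.Finite.toFinset hf) := fun hf => (hj hf).trans' j.lt_succ_self
    rw [Lseq, ih hj', Nat.nth_eq_sInf _ (j + 1)]
    congr 1
    ext i
    simp only [Set.mem_ofPred_eq]
    exact ⟨fun h => ⟨h.2, fun k hk =>
      (Nat.nth_le_nth' (Nat.le_of_lt_succ hk) hj').trans_lt h.1⟩,
      fun h => ⟨h.2 j j.lt_succ_self, h.1⟩⟩

section Words

variable {α : Type*} {m : ℕ}

def IsRepeat (f : Fin m → α × Bool) (i : Fin m) : Prop :=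
  ∃ j : Fin m, (j : ℕ) < i ∧ (f j).1 = (f i).1

theorem isRepeat_snoc_castSucc (g : Fin m → α × Bool) (a : α × Bool) (i : Fin m) :
    IsRepeat (Fin.snoc g a : Fin (m + 1) → α × Bool) i.castSucc ↔ IsRepeat g i := by
  constructor
  · rintro ⟨j, hj, hji⟩
    have hjm : (j : ℕ) < m := hj.trans i.isLt
    refine ⟨⟨j, hjm⟩, hj, ?_⟩
    rwa [show j = Fin.castSucc ⟨j, hjm⟩ from rfl, Fin.snoc_castSucc, Fin.snoc_castSucc] at hji
  · rintro ⟨j, hj, hji⟩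
    exact ⟨j.castSucc, hj, by rwa [Fin.snoc_castSucc, Fin.snoc_castSucc]⟩

variable [DecidableEq α]

instance (f : Fin m → α × Bool) : DecidablePred (IsRepeat f) :=
  fun i => inferInstanceAs (Decidable (∃ j : Fin m, (j : ℕ) < i ∧ (f j).1 = (f i).1))

def repeats (f : Fin m → α × Bool) : Finset ℕ :=
  (univ.filter (IsRepeat f)).map Fin.valEmbedding

def drawnTypes (f : Fin m → α × Bool) : Finset α :=
  univ.image fun i => (f i).1

theorem mem_repeats {f : Fin m → α × Bool} {i : ℕ} :
    i ∈ repeats f ↔ ∃ h : i < m, IsRepeat f ⟨i, h⟩ := by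
  simp [repeats, Fin.exists_iff]

theorem repeats_subset_range (f : Fin m → α × Bool) : repeats f ⊆ range m :=
  fun _ hi => mem_range.mpr (mem_repeats.mp hi).1

theorem zero_notMem_repeats (f : Fin m → α × Bool) : 0 ∉ repeats f := by
  simp [mem_repeats, IsRepeat]

theorem isRepeat_snoc_last (g : Fin m → α × Bool) (a : α × Bool) :
    IsRepeat (Fin.snoc g a : Fin (m + 1) → α × Bool) (Fin.last m) ↔ a.1 ∈ drawnTypes g := by
  simp only [IsRepeat, drawnTypes, mem_image, mem_univ, true_and, Fin.snoc_last, Fin.val_last]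
  constructor
  · rintro ⟨j, hj, hja⟩
    refine ⟨⟨j, hj⟩, ?_⟩
    rwa [show j = Fin.castSucc ⟨j, hj⟩ from rfl, Fin.snoc_castSucc] at hja
  · rintro ⟨j, hja⟩
    exact ⟨j.castSucc, j.isLt, by rwa [Fin.snoc_castSucc]⟩

theorem repeats_snoc (g : Fin m → α × Bool) (a : α × Bool) :
    repeats (Fin.snoc g a : Fin (m + 1) → α × Bool) =
      if a.1 ∈ drawnTypes g then insert m (repeats g) else repeats g := by
  have hlast := isRepeat_snoc_last g a
  have hcast (i : ℕ) (hi : i < m) := isRepeat_snoc_castSucc g a ⟨i, hi⟩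
  simp only [Fin.last, Fin.castSucc_mk] at hlast hcast
  ext i
  rw [mem_repeats, apply_ite (i ∈ ·), mem_insert, mem_repeats]
  rcases lt_trichotomy i m with hi | rfl | hi
  · simp [hi, hi.trans (lt_add_one m), hi.ne, hcast]
  · simp [hlast]
  · simp [hi.not_gt, hi.ne', hi.not_ge]

theorem drawnTypes_snoc (g : Fin m → α × Bool) (a : α × Bool) :
    drawnTypes (Fin.snoc g a : Fin (m + 1) → α × Bool) = insert a.1 (drawnTypes g) := by
  ext t
  simp [drawnTypes, Fin.exists_fin_succ', or_comm, eq_comm]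

theorem card_drawnTypes_add_card_repeats (f : Fin m → α × Bool) :
    #(drawnTypes f) + #(repeats f) = m := by
  induction f using Fin.snocInduction with
  | elim0 => simp [drawnTypes, repeats]
  | @snoc m g a ih =>
    have hm : m ∉ repeats g := fun h => notMem_range_self (repeats_subset_range g h)
    rw [repeats_snoc, drawnTypes_snoc]
    split_ifs with ha
    · rw [insert_eq_of_mem ha, card_insert_of_notMem hm]
      omega
    · rw [card_insert_of_notMem ha]
      omega

variable [Fintype α]

def freshSocks (g : Fin m → α × Bool) (b : Prop) [Decidable b] : Finset (α × Bool) :=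
  {a | a ∉ univ.image g ∧ (a.1 ∈ drawnTypes g ↔ b)}

theorem card_freshSocks {g : Fin m → α × Bool} (hg : Function.Injective g) (b : Prop)
    [Decidable b] :
    #(freshSocks g b) =
      if b then 2 * #(drawnTypes g) - m else 2 * (Fintype.card α - #(drawnTypes g)) := by
  have himage : univ.image g ⊆ drawnTypes g ×ˢ univ := by
    intro a ha
    obtain ⟨i, -, rfl⟩ := mem_image.mp ha
    simp [drawnTypes]
  split_ifs with hb
  · have : freshSocks g b = drawnTypes g ×ˢ univ \ univ.image g := by
      ext a
      simp only [freshSocks, mem_filter, mem_univ, true_and, mem_sdiff, mem_product,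
        iff_true_intro hb, iff_true, and_comm]
    rw [this, card_sdiff_of_subset himage, card_product, card_image_of_injective _ hg]
    simp [mul_comm]
  · have : freshSocks g b = (drawnTypes g)ᶜ ×ˢ univ := by
      ext a
      simp only [freshSocks, mem_filter, mem_univ, true_and, mem_product, mem_compl,
        iff_false_intro hb, iff_false, and_true, and_iff_right_iff_imp]
      exact fun ha h => ha (mem_product.mp (himage h)).1
    rw [this, card_product, card_compl]
    simp [mul_comm]

variable (α) in
def admissibleWords (T : Finset ℕ) (m : ℕ) : Finset (Fin m → α × Bool) :=
  {f | Function.Injective f ∧ repeats f = (range m).filter (· ∈ T)}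

/-- With `u` types drawn before position `i` (one per earlier non-repeat), a repeat at `i` draws
the partner of one of the `u - (i - u)` types drawn once so far, and a non-repeat either sock of
one of the `a - u` fresh types. A truncated subtraction only occurs when no such word exists. -/
def stepChoices (a : ℕ) (T : Finset ℕ) (i : ℕ) : ℕ :=
  if i ∈ T then 2 * Nat.count (· ∉ T) i - i else 2 * (a - Nat.count (· ∉ T) i)

theorem snoc_mem_admissibleWords_iff {T : Finset ℕ} {g : Fin m → α × Bool} {a : α × Bool} :
    (Fin.snoc g a : Fin (m + 1) → α × Bool) ∈ admissibleWords α T (m + 1) ↔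
      g ∈ admissibleWords α T m ∧ a ∈ freshSocks g (m ∈ T) := by
  have hrange : (range (m + 1)).filter (· ∈ T) =
      if m ∈ T then insert m ((range m).filter (· ∈ T)) else (range m).filter (· ∈ T) := by
    rw [range_add_one, filter_insert]
  have hg : m ∉ repeats g := fun h => notMem_range_self (repeats_subset_range g h)
  have hT : m ∉ (range m).filter (· ∈ T) := by simp
  simp only [admissibleWords, freshSocks, mem_filter, mem_univ, true_and,
    Fin.snoc_injective_iff, repeats_snoc, hrange, ite_insert_eq_ite_insert_iff hg hT,
    mem_image_univ_iff_mem_range]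
  tauto

theorem card_freshSocks_of_mem_admissibleWords {T : Finset ℕ} {g : Fin m → α × Bool}
    (hg : g ∈ admissibleWords α T m) :
    #(freshSocks g (m ∈ T)) = stepChoices (Fintype.card α) T m := by
  simp only [admissibleWords, mem_filter, mem_univ, true_and] at hg
  have htypes : #(drawnTypes g) = Nat.count (· ∉ T) m := by
    have h₁ := card_drawnTypes_add_card_repeats g
    have h₂ := Nat.count_add_count_not (· ∈ T) m
    rw [hg.2, ← Nat.count_eq_card_filter_range (· ∈ T)] at h₁
    omega
  rw [card_freshSocks hg.1, htypes, stepChoices]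

theorem card_admissibleWords_succ (T : Finset ℕ) (m : ℕ) :
    #(admissibleWords α T (m + 1)) =
      #(admissibleWords α T m) * stepChoices (Fintype.card α) T m := by
  calc #(admissibleWords α T (m + 1))
      = #((admissibleWords α T m).sigma fun g => freshSocks g (m ∈ T)) := by
        refine card_nbij' (fun f => ⟨Fin.init f, f (Fin.last m)⟩) (fun p => Fin.snoc p.1 p.2)
          (fun f hf => ?_) (fun p hp => ?_) (fun f _ => Fin.snoc_init_self f) (fun p _ => by simp)
        · rw [mem_coe, ← Fin.snoc_init_self f, snoc_mem_admissibleWords_iff] at hf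
          simpa using hf
        · simpa [snoc_mem_admissibleWords_iff] using hp
    _ = #(admissibleWords α T m) * stepChoices (Fintype.card α) T m := by
        rw [card_sigma, sum_congr rfl fun g hg => card_freshSocks_of_mem_admissibleWords hg,
          sum_const, smul_eq_mul]

theorem card_admissibleWords (T : Finset ℕ) (m : ℕ) :
    #(admissibleWords α T m) = ∏ i ∈ range m, stepChoices (Fintype.card α) T i := by
  induction m with
  | zero => simp [admissibleWords, repeats, Function.injective_of_subsingleton]
  | succ m ih => rw [card_admissibleWords_succ, ih, prod_range_succ]

end Words

section Socks

variable {n : ℕ}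

theorem sockPath_succ_of_lt (ω : Fin (2 * n) → Fin n × Bool) {m : ℕ} (hm : m < 2 * n) :
    sockPath n ω (m + 1) = sockPath n ω m + if m ∈ repeats ω then -1 else 1 := by
  rw [sockPath, dif_pos hm]
  simp only [mem_repeats, hm, exists_true_left]
  rfl

theorem sockPath_succ_eq_sub_one_iff (ω : Fin (2 * n) → Fin n × Bool) (m : ℕ) :
    sockPath n ω (m + 1) = sockPath n ω m - 1 ↔ m ∈ repeats ω := by
  by_cases hm : m < 2 * n
  · rw [sockPath_succ_of_lt ω hm]
    split_ifs with h <;> simp [h, sub_eq_add_neg]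
  · rw [sockPath, dif_neg hm, add_zero]
    exact iff_of_false (by omega) fun h => hm (mem_range.mp (repeats_subset_range ω h))

theorem sockPath_eq_sub_count (ω : Fin (2 * n) → Fin n × Bool) {m : ℕ} (hm : m ≤ 2 * n) :
    sockPath n ω m = m - 2 * Nat.count (· ∈ repeats ω) m := by
  induction m with
  | zero => rfl
  | succ m ih =>
    rw [sockPath_succ_of_lt ω hm, ih (by omega), Nat.count_succ]
    split_ifs <;> push_cast <;> ring

theorem card_repeats_of_equiv (ω : Fin (2 * n) ≃ Fin n × Bool) : #(repeats ω) = n := by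
  have h := card_drawnTypes_add_card_repeats ⇑ω
  have htypes : drawnTypes ⇑ω = univ :=
    eq_univ_of_forall fun t => mem_image.mpr ⟨ω.symm (t, true), mem_univ _, by simp⟩
  rw [htypes, card_univ, Fintype.card_fin] at h
  omega

theorem kseq_sockPath (ω : Fin (2 * n) ≃ Fin n × Bool) {j : ℕ} (hj : j < n) :
    Kseq (sockPath n ω) (j + 1) = Nat.nth (· ∈ repeats ω) j - 2 * j := by
  have hstep : (fun i => sockPath n ω (i + 1) = sockPath n ω i - 1) = (· ∈ repeats ω) :=
    funext fun i => propext (sockPath_succ_eq_sub_one_iff ω i)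
  have hlt : ∀ hf : (Set.ofPred (· ∈ repeats ω)).Finite, j < #hf.toFinset :=
    (Nat.forall_lt_card_toFinset_mem_iff _ j).mpr (by rwa [card_repeats_of_equiv])
  have h₀ : sockPath n ω 1 ≠ sockPath n ω 0 - 1 :=
    (sockPath_succ_eq_sub_one_iff ω 0).not.mpr (zero_notMem_repeats ω)
  have hmem := repeats_subset_range ω (Nat.nth_mem j hlt)
  rw [Kseq, lseq_succ_eq_nth h₀ (hstep ▸ hlt), hstep,
    sockPath_eq_sub_count ω (mem_range.mp hmem).le, Nat.count_nth hlt]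

/-- `K_j = k j` for all `j` puts the `j`-th repeat at position `2(j - 1) + k j` (here `i = j - 1`,
and positions are counted from `0`). -/
def kseqRepeats (n : ℕ) (k : ℕ → ℕ) : Finset ℕ :=
  (range n).image fun i => 2 * i + k (i + 1)

variable {k : ℕ → ℕ} (hcond : ∀ i, 1 ≤ i → i < n → k i ≤ k (i + 1) + 1)
include hcond

theorem strictMonoOn_kseqRepeats : StrictMonoOn (fun i => 2 * i + k (i + 1)) (Set.Iio n) :=
  strictMonoOn_of_lt_succ Set.ordConnected_Iio fun i _ _ hi => by
    have := hcond (i + 1) (by omega) (by simpa using hi)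
    simp only [Order.succ_eq_add_one]
    omega

theorem kseq_sockPath_eq_iff (ω : Fin (2 * n) ≃ Fin n × Bool) :
    (∀ j, 1 ≤ j → j ≤ n → Kseq (sockPath n ω) j = (k j : ℤ)) ↔
      repeats ω = kseqRepeats n k := by
  rw [kseqRepeats, ← Nat.nth_mem_eq_iff_eq_image (card_repeats_of_equiv ω)
    (strictMonoOn_kseqRepeats hcond)]
  refine ⟨fun h i hi => ?_, fun h j hj₁ hj₂ => ?_⟩
  · have := h (i + 1) (by omega) hi
    rw [kseq_sockPath ω hi] at this
    omega
  · obtain ⟨i, rfl⟩ := Nat.exists_eq_add_of_le' hj₁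
    rw [kseq_sockPath ω (by omega), h i (by omega)]
    push_cast
    ring

theorem card_kseqRepeats : #(kseqRepeats n k) = n := by
  rw [kseqRepeats, card_image_of_injOn (by simpa using (strictMonoOn_kseqRepeats hcond).injOn),
    card_range]

theorem count_kseqRepeats {i : ℕ} (hi : i < n) :
    Nat.count (· ∈ kseqRepeats n k) (2 * i + k (i + 1)) = i := by
  have hnth := (Nat.nth_mem_eq_iff_eq_image (card_kseqRepeats hcond)
    (strictMonoOn_kseqRepeats hcond)).mpr rfl i hi
  rw [← hnth, Nat.count_nth
    ((Nat.forall_lt_card_toFinset_mem_iff _ i).mpr (by rwa [card_kseqRepeats hcond]))]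

theorem stepChoices_kseqRepeats {i : ℕ} (hi : i < n) :
    stepChoices n (kseqRepeats n k) (2 * i + k (i + 1)) = k (i + 1) := by
  have h₁ := count_kseqRepeats hcond hi
  have h₂ := Nat.count_add_count_not (· ∈ kseqRepeats n k) (2 * i + k (i + 1))
  rw [stepChoices, if_pos (show _ ∈ kseqRepeats n k from mem_image_of_mem _ (mem_range.mpr hi))]
  omega

theorem prod_stepChoices_kseqRepeats :
    ∏ i ∈ kseqRepeats n k, stepChoices n (kseqRepeats n k) i = ∏ j ∈ Icc 1 n, k j :=
  calc ∏ i ∈ kseqRepeats n k, stepChoices n (kseqRepeats n k) i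
      = ∏ i ∈ range n, stepChoices n (kseqRepeats n k) (2 * i + k (i + 1)) :=
        prod_image (by simpa using (strictMonoOn_kseqRepeats hcond).injOn)
    _ = ∏ i ∈ range n, k (i + 1) :=
        prod_congr rfl fun i hi => stepChoices_kseqRepeats hcond (mem_range.mp hi)
    _ = ∏ j ∈ Icc 1 n, k j := by
        rw [← Ico_add_one_right_eq_Icc, ← Nat.Ico_zero_eq_range, prod_Ico_add' k 0 n 1]

variable (hlast : k n = 1)
include hlast

theorem filter_range_mem_kseqRepeats :
    (range (2 * n)).filter (· ∈ kseqRepeats n k) = kseqRepeats n k := by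
  rw [filter_mem_eq_inter, inter_eq_right]
  intro x hx
  obtain ⟨i, hi, rfl⟩ := mem_image.mp hx
  rw [mem_range] at hi ⊢
  have := (strictMonoOn_kseqRepeats hcond).monotoneOn hi (show n - 1 < n by omega)
    (Nat.le_sub_one_of_lt hi)
  simp only [Nat.sub_add_cancel (by omega : 1 ≤ n), hlast] at this
  omega

theorem prod_stepChoices_not_mem_kseqRepeats :
    ∏ i ∈ (range (2 * n)).filter (· ∉ kseqRepeats n k), stepChoices n (kseqRepeats n k) i =
      2 ^ n * n.factorial := by
  have hcount : Nat.count (· ∉ kseqRepeats n k) (2 * n) = n := by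
    have h := Nat.count_add_count_not (· ∈ kseqRepeats n k) (2 * n)
    rw [Nat.count_eq_card_filter_range, filter_range_mem_kseqRepeats hcond hlast,
      card_kseqRepeats hcond] at h
    omega
  rw [prod_congr rfl fun i hi => by rw [stepChoices, if_neg (mem_filter.mp hi).2],
    Nat.prod_filter_range_count (· ∉ kseqRepeats n k) (fun r => 2 * (n - r)), hcount,
    prod_mul_distrib, prod_const, card_range, ← Nat.descFactorial_eq_prod_range,
    Nat.descFactorial_self]

open Classical in
theorem card_kseq_eq :
    #{ω : Fin (2 * n) ≃ Fin n × Bool |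
        ∀ j, 1 ≤ j → j ≤ n → Kseq (sockPath n ⇑ω) j = (k j : ℤ)} =
      2 ^ n * n.factorial * ∏ j ∈ Icc 1 n, k j := by
  have h := card_admissibleWords (α := Fin n) (kseqRepeats n k) (2 * n)
  rw [Fintype.card_fin, ← prod_filter_mul_prod_filter_not _ (· ∈ kseqRepeats n k),
    prod_stepChoices_not_mem_kseqRepeats hcond hlast, filter_range_mem_kseqRepeats hcond hlast,
    prod_stepChoices_kseqRepeats hcond, admissibleWords,
    filter_range_mem_kseqRepeats hcond hlast] at h
  simp only [kseq_sockPath_eq_iff hcond]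
  rw [card_filter_equiv_eq_card_filter_injective (by simp [mul_comm])
    (repeats · = kseqRepeats n k), h, mul_comm]

end Socks

open Classical in
theorem stmt_14_general (n : ℕ) (k k' : ℕ → ℕ)
    (hcond : ∀ i, 1 ≤ i → i < n → k i ≤ k (i + 1) + 1) (hlast : k n = 1)
    (hcond' : ∀ i, 1 ≤ i → i < n → k' i ≤ k' (i + 1) + 1) (hlast' : k' n = 1)
    (hperm : (Finset.Icc 1 n).val.map k' = (Finset.Icc 1 n).val.map k) :
    ((Finset.univ.filter fun ω : Fin (2 * n) ≃ Fin n × Bool =>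
          ∀ j, 1 ≤ j → j ≤ n → Kseq (sockPath n ⇑ω) j = (k j : ℤ)).card : ℚ) /
        (Nat.factorial (2 * n) : ℚ) =
      ((Finset.univ.filter fun ω : Fin (2 * n) ≃ Fin n × Bool =>
          ∀ j, 1 ≤ j → j ≤ n → Kseq (sockPath n ⇑ω) j = (k' j : ℤ)).card : ℚ) /
        (Nat.factorial (2 * n) : ℚ) ∧
    ((Finset.univ.filter fun ω : Fin (2 * n) ≃ Fin n × Bool =>
          ∀ j, 1 ≤ j → j ≤ n → Kseq (sockPath n ⇑ω) j = (k j : ℤ)).card : ℚ) /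
        (Nat.factorial (2 * n) : ℚ) =
      (2 ^ n * (Nat.factorial n : ℚ) * ∏ i ∈ Finset.Icc 1 n, (k i : ℚ)) /
        (Nat.factorial (2 * n) : ℚ) := by
  have hprod : ∏ i ∈ Icc 1 n, k' i = ∏ i ∈ Icc 1 n, k i := by
    rw [prod_eq_multiset_prod, prod_eq_multiset_prod, hperm]
  rw [card_kseq_eq hcond hlast, card_kseq_eq hcond' hlast', hprod]
  exact ⟨rfl, by push_cast; ring⟩

open Classical in
/-- If the positive integer tuples `(k 1, …, k n)` and `(k' 1, …, k' n)` both satisfy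
condition (1) and are rearrangements of each other, then under the uniform measure on
sock orderings the events `{K_j(x(ω)) = k j for all j}` and
`{K_j(x(ω)) = k' j for all j}` have the same probability, both equal to
`2^n · n! · (∏ k i) / (2n)!`. -/
theorem stmt_14 (n : ℕ) (hn : 1 ≤ n) (k k' : ℕ → ℕ)
    (hpos : ∀ i, 1 ≤ i → i ≤ n → 0 < k i)
    (hcond : ∀ i, 1 ≤ i → i < n → k i ≤ k (i + 1) + 1) (hlast : k n = 1)
    (hpos' : ∀ i, 1 ≤ i → i ≤ n → 0 < k' i)
    (hcond' : ∀ i, 1 ≤ i → i < n → k' i ≤ k' (i + 1) + 1) (hlast' : k' n = 1)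
    (hperm : (Finset.Icc 1 n).val.map k' = (Finset.Icc 1 n).val.map k) :
    ((Finset.univ.filter fun ω : Fin (2 * n) ≃ Fin n × Bool =>
          ∀ j, 1 ≤ j → j ≤ n → Kseq (sockPath n ⇑ω) j = (k j : ℤ)).card : ℚ) /
        (Nat.factorial (2 * n) : ℚ) =
      ((Finset.univ.filter fun ω : Fin (2 * n) ≃ Fin n × Bool =>
          ∀ j, 1 ≤ j → j ≤ n → Kseq (sockPath n ⇑ω) j = (k' j : ℤ)).card : ℚ) /
        (Nat.factorial (2 * n) : ℚ) ∧
    ((Finset.univ.filter fun ω : Fin (2 * n) ≃ Fin n × Bool =>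
          ∀ j, 1 ≤ j → j ≤ n → Kseq (sockPath n ⇑ω) j = (k j : ℤ)).card : ℚ) /
        (Nat.factorial (2 * n) : ℚ) =
      (2 ^ n * (Nat.factorial n : ℚ) * ∏ i ∈ Finset.Icc 1 n, (k i : ℚ)) /
        (Nat.factorial (2 * n) : ℚ) :=
  stmt_14_general n k k' hcond hlast hcond' hlast' hperm
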